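/- arXiv:2207.00638 — 4 statements merged into one kernel-verified Lean document; each statement's English description precedes it below -/
import Mathlib

section
/- Let q be a nonzero real number and set μ = iq. Then the set of λ ∈ S(μ) with Re(λ) = 0 is exactly {t·iq : t ∈ ℕ}; in particular, there are infinitely many λ ∈ S(μ) satisfying Re(λ) < |Im(λ)|. (Hence for purely imaginary nonzero μ, the Weyl vertex algebra _μM fails the vertex operator algebra growth condition Re(λ) ≥ |Im(λ)| for all but finitely many weights λ.) -/
/-- The spectrum of `L^μ(0)` on the Weyl vertex algebra `_μM`: the set of
complex numbers of the form `r + s + k·(1−μ) + t·μ` with `r, s, k, t ∈ ℕ`,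
subject to `k ≥ 1` whenever `r ≥ 1` and `t ≥ 1` whenever `s ≥ 1`. -/
def weylSpec (μ : ℂ) : Set ℂ :=
  {x | ∃ r s k t : ℕ, (1 ≤ r → 1 ≤ k) ∧ (1 ≤ s → 1 ≤ t) ∧
    x = (r : ℂ) + (s : ℂ) + (k : ℂ) * (1 - μ) + (t : ℂ) * μ}

/-- For `μ = iq` with `q ∈ ℝ` nonzero, the set of `λ ∈ S(μ)` with `Re(λ) = 0`
is exactly `{t·iq : t ∈ ℕ}`; in particular there are infinitely many
`λ ∈ S(μ)` with `Re(λ) < |Im(λ)|`. -/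
theorem weylSpec_imaginary_axis (q : ℝ) (hq : q ≠ 0) :
    {lam ∈ weylSpec (Complex.I * q) | lam.re = 0} =
      {x : ℂ | ∃ t : ℕ, x = (t : ℂ) * (Complex.I * q)} ∧
    {lam ∈ weylSpec (Complex.I * q) | lam.re < |lam.im|}.Infinite := by
  constructor
  · ext x
    simp only [Set.mem_setOf_eq, Set.mem_sep_iff, weylSpec]
    constructor
    · rintro ⟨⟨r, s, k, t, hr, hs, hx⟩, hre⟩
      rw [hx] at hre
      have hre' : (r : ℝ) + s + k = 0 := by
        simpa [Complex.add_re, Complex.mul_re, Complex.sub_re, Complex.sub_im,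
          Complex.mul_im] using hre
      have h0 : (↑(r + s + k) : ℝ) = 0 := by push_cast; linarith
      have h0' : r + s + k = 0 := by exact_mod_cast h0
      have : r = 0 ∧ s = 0 ∧ k = 0 := by omega
      obtain ⟨hr0, hs0, hk0⟩ := this
      exact ⟨t, by rw [hx, hr0, hs0, hk0]; push_cast; ring⟩
    · rintro ⟨t, rfl⟩
      refine ⟨⟨0, 0, 0, t, by omega, by omega, by push_cast; ring⟩, ?_⟩
      simp [Complex.mul_re, Complex.mul_im]
  · apply Set.infinite_of_injective_forall_mem
      (f := fun n : ℕ => ((n : ℂ) + 1) * (Complex.I * q))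
    · intro a b hab
      have hIq : (Complex.I * q) ≠ 0 := by
        simp [Complex.ext_iff, hq]
      have : ((a : ℂ) + 1) = ((b : ℂ) + 1) := mul_right_cancel₀ hIq hab
      exact_mod_cast add_right_cancel (by exact_mod_cast this : (a : ℂ) + 1 = b + 1)
    · intro n
      refine ⟨⟨0, 0, 0, n + 1, by omega, by omega, by push_cast; ring⟩, ?_⟩
      have hre : ((((n : ℂ) + 1)) * (Complex.I * q)).re = 0 := by
        simp [Complex.mul_re, Complex.mul_im]
      have him : ((((n : ℂ) + 1)) * (Complex.I * q)).im = (n + 1) * q := by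
        simp [Complex.mul_im, Complex.mul_re]
      rw [hre, him]
      have : |(((n : ℝ)) + 1) * q| = ((n : ℝ) + 1) * |q| := by
        rw [abs_mul, abs_of_pos (by positivity : (0:ℝ) < (n:ℝ) + 1)]
      rw [this]
      positivity
end

section
/- For μ ∈ ℂ, the inequality Re(λ) ≥ |Im(λ)| holds for every λ ∈ S(μ) if and only if μ = 0, or μ = 1, or (0 < Re(μ) < 1 and |Im(μ)| ≤ min(Re(μ), 1 − Re(μ))). (This is the arithmetic characterization of the diamond-shaped region of parameters μ for which the Weyl vertex algebra _μM is an Ω-generated ℂ_{Re>0}-graded vertex operator algebra, as in Theorem 3.1.) -/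
/-- The inequality `Re(λ) ≥ |Im(λ)|` holds for every `λ ∈ S(μ)` if and only
if `μ = 0`, or `μ = 1`, or `0 < Re(μ) < 1` with
`|Im(μ)| ≤ min(Re(μ), 1 − Re(μ))` (the diamond-shaped region). -/
theorem weylSpec_voa_growth_iff (μ : ℂ) :
    (∀ lam ∈ weylSpec μ, |lam.im| ≤ lam.re) ↔
      μ = 0 ∨ μ = 1 ∨
        (0 < μ.re ∧ μ.re < 1 ∧ |μ.im| ≤ min μ.re (1 - μ.re)) := by
  constructor
  · intro h
    have h1 : |μ.im| ≤ μ.re := by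
      have := h μ ⟨0, 0, 0, 1, by simp, by simp, by push_cast; ring⟩
      simpa using this
    have h2 : |μ.im| ≤ 1 - μ.re := by
      have := h (1 - μ) ⟨0, 0, 1, 0, by simp, by simp, by push_cast; ring⟩
      simpa using this
    have hb : 0 ≤ |μ.im| := abs_nonneg _
    by_cases ha0 : μ.re = 0
    · left
      have him : μ.im = 0 := abs_nonpos_iff.mp (by linarith)
      exact Complex.ext ha0 him
    by_cases ha1 : μ.re = 1
    · right; left
      have him : μ.im = 0 := abs_nonpos_iff.mp (by linarith)
      exact Complex.ext ha1 him
    · right; right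
      refine ⟨lt_of_le_of_ne (by linarith) (Ne.symm ha0),
        lt_of_le_of_ne (by linarith) ha1, le_min h1 h2⟩
  · rintro h lam ⟨r, s, k, t, hr, hs, rfl⟩
    have hre : ((r : ℂ) + (s : ℂ) + (k : ℂ) * (1 - μ) + (t : ℂ) * μ).re
        = (r : ℝ) + s + k * (1 - μ.re) + t * μ.re := by
      simp [Complex.add_re, Complex.mul_re, Complex.sub_re, Complex.sub_im]
      try ring
    have him : ((r : ℂ) + (s : ℂ) + (k : ℂ) * (1 - μ) + (t : ℂ) * μ).im
        = ((t : ℝ) - k) * μ.im := by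
      simp [Complex.add_im, Complex.mul_im, Complex.sub_re, Complex.sub_im]
      try ring
    rw [hre, him]
    have hr0 : (0:ℝ) ≤ r := Nat.cast_nonneg r
    have hs0 : (0:ℝ) ≤ s := Nat.cast_nonneg s
    have hk0 : (0:ℝ) ≤ k := Nat.cast_nonneg k
    have ht0 : (0:ℝ) ≤ t := Nat.cast_nonneg t
    rcases h with h0 | h1 | ⟨ha0, ha1, hm⟩
    · subst h0; simp; linarith
    · subst h1; simp; linarith
    · have hb1 : |μ.im| ≤ μ.re := hm.trans (min_le_left _ _)
      have hb2 : |μ.im| ≤ 1 - μ.re := hm.trans (min_le_right _ _)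
      rw [abs_mul]
      rcases le_total (k : ℝ) (t : ℝ) with hkt | hkt
      · rw [abs_of_nonneg (by linarith : (0:ℝ) ≤ (t:ℝ) - k)]
        have := mul_le_mul_of_nonneg_left hb1 (by linarith : (0:ℝ) ≤ (t:ℝ) - k)
        nlinarith
      · rw [abs_of_nonpos (by linarith : (t:ℝ) - k ≤ 0)]
        have := mul_le_mul_of_nonneg_left hb2 (by linarith : (0:ℝ) ≤ (k:ℝ) - t)
        nlinarith
end

section
/- Let μ ∈ ℂ with 0 ≤ Re(μ) ≤ 1 and μ ∉ {0, 1}. Then for every x ∈ ℂ, the set of quadruples (r, s, k, t) ∈ ℕ⁴ satisfying r + s + k·(1−μ) + t·μ = x is finite. (This is the arithmetic content of the statement that all L^μ(0)-weight spaces of the Weyl vertex algebra _μM are finite dimensional for these values of μ.) -/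
/-- For `μ ∈ ℂ` with `0 ≤ Re(μ) ≤ 1` and `μ ∉ {0, 1}`, for every `x ∈ ℂ` the
set of quadruples `(r, s, k, t) ∈ ℕ⁴` with `r + s + k·(1−μ) + t·μ = x` is
finite (finite dimensionality of the `L^μ(0)`-weight spaces of `_μM`). -/
theorem weylSpec_fibers_finite (μ : ℂ) (h0 : 0 ≤ μ.re) (h1 : μ.re ≤ 1)
    (hμ0 : μ ≠ 0) (hμ1 : μ ≠ 1) (x : ℂ) :
    {p : ℕ × ℕ × ℕ × ℕ |
      (p.1 : ℂ) + (p.2.1 : ℂ) + (p.2.2.1 : ℂ) * (1 - μ) + (p.2.2.2 : ℂ) * μ = x}.Finite := by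
  set a := μ.re with ha
  set b := μ.im with hb
  set N : ℕ := ⌈x.re⌉₊ + ⌈x.re / a⌉₊ + ⌈x.re / (1 - a)⌉₊ + ⌈|x.im / b|⌉₊ with hNdef
  have hfin : (Set.Iic N ×ˢ Set.Iic N ×ˢ Set.Iic N ×ˢ Set.Iic N :
      Set (ℕ × ℕ × ℕ × ℕ)).Finite :=
    (Set.finite_Iic N).prod ((Set.finite_Iic N).prod
      ((Set.finite_Iic N).prod (Set.finite_Iic N)))
  apply hfin.subset
  rintro ⟨r, s, k, t⟩ hp
  simp only [Set.mem_setOf_eq] at hp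
  have hre : (r : ℝ) + s + k * (1 - a) + t * a = x.re := by
    have := congrArg Complex.re hp
    simpa using this
  have him : ((t : ℝ) - k) * b = x.im := by
    have := congrArg Complex.im hp
    simp at this
    linarith [this]
  -- basic ceiling facts
  have c1 : x.re ≤ (⌈x.re⌉₊ : ℝ) := Nat.le_ceil _
  have c2 : x.re / a ≤ (⌈x.re / a⌉₊ : ℝ) := Nat.le_ceil _
  have c3 : x.re / (1 - a) ≤ (⌈x.re / (1 - a)⌉₊ : ℝ) := Nat.le_ceil _
  have c4 : |x.im / b| ≤ (⌈|x.im / b|⌉₊ : ℝ) := Nat.le_ceil _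
  have hNcast : (N : ℝ) = (⌈x.re⌉₊ : ℝ) + ⌈x.re / a⌉₊ + ⌈x.re / (1 - a)⌉₊ + ⌈|x.im / b|⌉₊ := by
    push_cast [hNdef]; ring
  have hn2 : (0 : ℝ) ≤ (⌈x.re / a⌉₊ : ℝ) := Nat.cast_nonneg _
  have hn3 : (0 : ℝ) ≤ (⌈x.re / (1 - a)⌉₊ : ℝ) := Nat.cast_nonneg _
  have hn4 : (0 : ℝ) ≤ (⌈|x.im / b|⌉₊ : ℝ) := Nat.cast_nonneg _
  have hn1 : (0 : ℝ) ≤ (⌈x.re⌉₊ : ℝ) := Nat.cast_nonneg _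
  -- nonnegativity of the four terms
  have tr : (0 : ℝ) ≤ (r : ℝ) := Nat.cast_nonneg _
  have ts : (0 : ℝ) ≤ (s : ℝ) := Nat.cast_nonneg _
  have tk : (0 : ℝ) ≤ (k : ℝ) * (1 - a) :=
    mul_nonneg (Nat.cast_nonneg _) (by linarith)
  have tt : (0 : ℝ) ≤ (t : ℝ) * a := mul_nonneg (Nat.cast_nonneg _) h0
  -- bound k
  have hkb : (k : ℝ) ≤ N := by
    rcases lt_or_eq_of_le h1 with hlt | heq
    · have h1a : (0 : ℝ) < 1 - a := by linarith
      have : (k : ℝ) ≤ x.re / (1 - a) := by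
        rw [le_div_iff₀ h1a]; linarith
      rw [hNcast]; linarith
    · -- a = 1, so b ≠ 0
      have hbne : b ≠ 0 := by
        intro hb0
        apply hμ1
        apply Complex.ext <;> simp [← ha, ← hb, heq, hb0]
      have htk : (t : ℝ) - k = x.im / b := by
        field_simp at him ⊢
        linarith [him]
      have htle : (t : ℝ) ≤ x.re := by
        rw [heq] at hre; simp at hre; linarith
      have : (k : ℝ) = t - x.im / b := by linarith
      have habs : -(x.im / b) ≤ |x.im / b| := neg_le_abs _
      rw [hNcast]; linarith
  -- bound t
  have htb : (t : ℝ) ≤ N := by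
    rcases lt_or_eq_of_le h0 with hlt | heq
    · have : (t : ℝ) ≤ x.re / a := by
        rw [le_div_iff₀ hlt]; linarith
      rw [hNcast]; linarith
    · -- a = 0, so b ≠ 0
      have hbne : b ≠ 0 := by
        intro hb0
        apply hμ0
        apply Complex.ext <;> simp [← ha, ← hb, ← heq, hb0]
      have htk : (t : ℝ) - k = x.im / b := by
        field_simp at him ⊢
        linarith [him]
      have hkle : (k : ℝ) ≤ x.re := by
        rw [← heq] at hre; simp at hre; linarith
      have : (t : ℝ) = k + x.im / b := by linarith
      have habs : x.im / b ≤ |x.im / b| := le_abs_self _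
      rw [hNcast]; linarith
  have hrb : (r : ℝ) ≤ N := by rw [hNcast]; linarith
  have hsb : (s : ℝ) ≤ N := by rw [hNcast]; linarith
  exact ⟨by exact_mod_cast hrb, by exact_mod_cast hsb,
    by exact_mod_cast hkb, by exact_mod_cast htb⟩
end

section
/- For μ ∈ ℂ, there exists λ ∈ S(μ) with Re(λ) < 0 if and only if Re(μ) < 0 or Re(μ) > 1. (This is the arithmetic content of Case 5 of the classification: outside the strip 0 ≤ Re(μ) ≤ 1 the Weyl vertex algebra _μM has weight spaces whose weights have negative real part, while inside the strip all weights λ satisfy Re(λ) ≥ 0.) -/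
/-- There exists `λ ∈ S(μ)` with `Re(λ) < 0` if and only if `Re(μ) < 0` or
`Re(μ) > 1`. -/
theorem weylSpec_exists_negative_re_iff (μ : ℂ) :
    (∃ lam ∈ weylSpec μ, lam.re < 0) ↔ μ.re < 0 ∨ 1 < μ.re := by
  constructor
  · rintro ⟨lam, ⟨r, s, k, t, _, _, rfl⟩, hre⟩
    by_contra h
    push_neg at h
    obtain ⟨h0, h1⟩ := h
    have : ((r : ℂ) + (s : ℂ) + (k : ℂ) * (1 - μ) + (t : ℂ) * μ).re
        = (r : ℝ) + s + k * (1 - μ.re) + t * μ.re := by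
      simp [Complex.add_re, Complex.mul_re, Complex.sub_re, Complex.one_re]
    rw [this] at hre
    have hk : (0:ℝ) ≤ (k:ℝ) * (1 - μ.re) := mul_nonneg (Nat.cast_nonneg k) (by linarith)
    have ht : (0:ℝ) ≤ (t:ℝ) * μ.re := mul_nonneg (Nat.cast_nonneg t) h0
    have hr : (0:ℝ) ≤ (r:ℝ) := Nat.cast_nonneg r
    have hs : (0:ℝ) ≤ (s:ℝ) := Nat.cast_nonneg s
    linarith
  · rintro (h | h)
    · refine ⟨μ, ⟨0, 0, 0, 1, by simp, by simp, by simp⟩, h⟩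
    · refine ⟨1 - μ, ⟨0, 0, 1, 0, by simp, by simp, by simp⟩, ?_⟩
      simp [Complex.sub_re, Complex.one_re]
      linarith
end
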